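/- arXiv:1512.04515 — 2 statements merged into one kernel-verified Lean document; each statement's English description precedes it below -/
import Mathlib

section
/- Let w₁, w₂ > 0 and C > 0, and suppose C is a power of 2 times itself expressible as products ℓ·r where ℓ, r range over powers of 2 with ℓ·r = C. Then there exist powers of two ℓ, r with ℓ·r = C such that w₁/r + w₂/ℓ ≤ 2 · min over all positive reals ℓ', r' with ℓ'·r' = C of (w₁/r' + w₂/ℓ'), i.e., the restriction to powers of two loses at most a factor of 2. -/
/-!
Substituting `ℓ' r' = 2ⁿ`, the objective becomes `A / ℓ' + B ℓ'` with `A = w₂` and `B = w₁ / 2ⁿ`.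
If `B m² = A`, then `A / y + B y - 2 B m = B (y - m)² / y ≥ 0`, so `2 B m` is the unconstrained
minimum, while a power of two `x` with `x ≤ m < 2x` gives `A / x + B x ≤ 2 B m + B m`.
So powers of two even lose at most a factor `3 / 2`.
-/

section DivAddMul

variable {A B m : ℝ}

lemma two_mul_mul_le_div_add_mul (hB : 0 ≤ B) (hm : B * m ^ 2 = A) {y : ℝ} (hy : 0 < y) :
    2 * (B * m) ≤ A / y + B * y := by
  have key : A / y + B * y - 2 * (B * m) = B * (y - m) ^ 2 / y := by
    rw [← hm]
    field_simp
    ring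
  have : 0 ≤ B * (y - m) ^ 2 / y := by positivity
  linarith

lemma div_add_mul_le_three_mul_mul (hB : 0 ≤ B) (hm : B * m ^ 2 = A) {x : ℝ} (hx : 0 < x)
    (hxm : x ≤ m) (hmx : m ≤ 2 * x) : A / x + B * x ≤ 3 * (B * m) := by
  have hBm : 0 ≤ B * m := mul_nonneg hB (hx.le.trans hxm)
  have hdiv : A / x ≤ 2 * (B * m) := by
    rw [div_le_iff₀ hx, ← hm]
    nlinarith [mul_le_mul_of_nonneg_left hmx hBm]
  have hmul : B * x ≤ B * m := mul_le_mul_of_nonneg_left hxm hB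
  linarith

lemma exists_zpow_two_div_add_mul_le (hA : 0 < A) (hB : 0 < B) :
    ∃ a : ℤ, ∀ y : ℝ, 0 < y → A / 2 ^ a + B * 2 ^ a ≤ 3 / 2 * (A / y + B * y) := by
  set m := √(A / B)
  have hm : B * m ^ 2 = A := by
    rw [Real.sq_sqrt (div_pos hA hB).le]
    field_simp
  obtain ⟨a, hle, hlt⟩ := exists_mem_Ico_zpow (Real.sqrt_pos.2 (div_pos hA hB)) one_lt_two
  refine ⟨a, fun y hy => ?_⟩
  have hmx : m ≤ 2 * 2 ^ a := by
    rw [zpow_add_one₀ two_ne_zero, mul_comm] at hlt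
    exact hlt.le
  have upper := div_add_mul_le_three_mul_mul hB.le hm (zpow_pos two_pos a) hle hmx
  have lower := two_mul_mul_le_div_add_mul hB.le hm hy
  linarith

end DivAddMul

/-- Restricting `ℓ, r` to powers of two with `ℓ·r = C` (where `C` is a power of two)
loses at most a factor of `2` over the unconstrained minimum of `w₁/r + w₂/ℓ`. -/
theorem powers_of_two_lose_factor_two (n : ℤ) (w₁ w₂ : ℝ) (hw₁ : 0 < w₁) (hw₂ : 0 < w₂) :
    ∃ a b : ℤ, (2 : ℝ) ^ a * (2 : ℝ) ^ b = (2 : ℝ) ^ n ∧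
      ∀ ℓ' r' : ℝ, 0 < ℓ' → 0 < r' → ℓ' * r' = (2 : ℝ) ^ n →
        w₁ / (2 : ℝ) ^ b + w₂ / (2 : ℝ) ^ a ≤ 2 * (w₁ / r' + w₂ / ℓ') := by
  have hC : (0 : ℝ) < 2 ^ n := zpow_pos two_pos n
  obtain ⟨a, ha⟩ := exists_zpow_two_div_add_mul_le hw₂ (div_pos hw₁ hC)
  have hab : (2 : ℝ) ^ a * 2 ^ (n - a) = 2 ^ n := by
    rw [← zpow_add₀ two_ne_zero, add_sub_cancel]
  refine ⟨a, n - a, hab, fun ℓ' r' hℓ' hr' hℓr' => ?_⟩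
  have hr'_eq : w₁ / r' = w₁ / 2 ^ n * ℓ' := by
    rw [← hℓr']
    field_simp
  have hb_eq : w₁ / 2 ^ (n - a) = w₁ / 2 ^ n * 2 ^ a := by
    rw [← hab]
    field_simp
  have hbound := ha ℓ' hℓ'
  have hpos : 0 < w₁ / r' + w₂ / ℓ' := by positivity
  rw [hb_eq]
  linarith
end

section
/- Suppose for each pair with d_{u,v} ≥ ε·d or d'_{u,v} ≠ 0 we have |d_{u,v} − d'_{u,v}| ≤ √(ε·w(u)·w(v))/4 + ε·d/2⁹, d'_{u,v} = 0 whenever d_{u,v} < ε·d and the pair was filtered, the number of pairs with d_{u,v} ≥ ε·d or d'_{u,v} ≠ 0 is at most 4/ε, and Σ_{u,v with d_{u,v}<εd and d'_{u,v}=0} d_{u,v}² ≤ ε·d²/2. Then Σ_{u,v} (d_{u,v} − d'_{u,v})² ≤ ((2¹³+2¹²+1)/2¹⁴)·ε·d² and in particular ≤ 0.752·ε·d². -/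
/-! Split the pairs into the recorded ones `S` (where `d ≥ εd` or `d' ≠ 0`) and the rest.
Off `S` we have `d' = 0`, so the error there is the small-entry mass, at most `εd²/2`.
On `S`, `(a + b)² ≤ 2a² + 2b²` turns the per-pair bound into `ε w(u) w(v)/8 + ε²d²/2¹⁷`;
the first terms sum to at most `εd²/8` because `Σ w(u) w(v) = d²`, and the second ones to
at most `εd²/2¹⁵` because `|S| ≤ 4/ε`. -/

open Finset

theorem sum_sq_le_of_abs_le_add {ι : Type*} (s : Finset ι) (e a : ι → ℝ) (b N : ℝ)
    (he : ∀ i ∈ s, |e i| ≤ a i + b) (hN : (#s : ℝ) ≤ N) :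
    ∑ i ∈ s, e i ^ 2 ≤ 2 * ∑ i ∈ s, a i ^ 2 + 2 * N * b ^ 2 := by
  have hpoint : ∀ i ∈ s, e i ^ 2 ≤ 2 * a i ^ 2 + 2 * b ^ 2 := fun i hi => by
    have h := pow_le_pow_left₀ (abs_nonneg (e i)) (he i hi) 2
    rw [sq_abs] at h
    linarith [add_sq_le (a := a i) (b := b)]
  calc ∑ i ∈ s, e i ^ 2 ≤ ∑ i ∈ s, (2 * a i ^ 2 + 2 * b ^ 2) := sum_le_sum hpoint
    _ = 2 * ∑ i ∈ s, a i ^ 2 + #s * (2 * b ^ 2) := by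
      rw [sum_add_distrib, ← mul_sum, sum_const, nsmul_eq_mul]
    _ ≤ 2 * ∑ i ∈ s, a i ^ 2 + 2 * N * b ^ 2 := by nlinarith [sq_nonneg b]

theorem sum_rowSum_mul_colSum {α β : Type*} [Fintype α] [Fintype β] (d : α × β → ℝ) :
    ∑ q : α × β, (∑ v, d (q.1, v)) * (∑ u, d (u, q.2)) = (∑ r, d r) ^ 2 := by
  rw [Fintype.sum_prod_type]
  dsimp only
  rw [← sum_mul_sum, sq]
  congr 1
  · rw [Fintype.sum_prod_type]
  · rw [Fintype.sum_prod_type_right]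

theorem sum_rowSum_mul_colSum_le {α β : Type*} [Fintype α] [Fintype β] (d : α × β → ℝ)
    (hd : ∀ q, 0 ≤ d q) (s : Finset (α × β)) :
    ∑ q ∈ s, (∑ v, d (q.1, v)) * (∑ u, d (u, q.2)) ≤ (∑ r, d r) ^ 2 := by
  rw [← sum_rowSum_mul_colSum]
  exact sum_le_sum_of_subset_of_nonneg (subset_univ s) fun q _ _ =>
    mul_nonneg (sum_nonneg fun _ _ => hd _) (sum_nonneg fun _ _ => hd _)

theorem sparse_recovery_error_bound_general {σ : Type*} [Fintype σ] (d d' : σ × σ → ℝ)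
    (hd : ∀ q, 0 ≤ d q) (ε : ℝ) (hε : 0 < ε)
    (hbound : ∀ q : σ × σ, (ε * (∑ r, d r) ≤ d q ∨ d' q ≠ 0) →
      |d q - d' q| ≤ Real.sqrt (ε * (∑ v', d (q.1, v')) * (∑ u', d (u', q.2))) / 4
        + ε * (∑ r, d r) / 2 ^ 9)
    (hcard : ((Finset.univ.filter
        (fun q : σ × σ => ε * (∑ r, d r) ≤ d q ∨ d' q ≠ 0)).card : ℝ) ≤ 4 / ε)
    (hsmall : ∑ q ∈ Finset.univ.filter
        (fun q : σ × σ => d q < ε * (∑ r, d r) ∧ d' q = 0), (d q) ^ 2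
      ≤ ε * (∑ r, d r) ^ 2 / 2) :
    ∑ q, (d q - d' q) ^ 2 ≤ ((2 ^ 13 + 2 ^ 12 + 1) / 2 ^ 14) * ε * (∑ r, d r) ^ 2 ∧
    ∑ q, (d q - d' q) ^ 2 ≤ 0.752 * ε * (∑ r, d r) ^ 2 := by
  set D := ∑ r, d r
  set w : σ × σ → ℝ := fun q => (∑ v', d (q.1, v')) * (∑ u', d (u', q.2))
  have hrecorded := sum_sq_le_of_abs_le_add _ (fun q => d q - d' q)
    (fun q => Real.sqrt (ε * w q) / 4) _ _ (fun q hq => by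
      simpa only [w, mul_assoc] using hbound q (mem_filter.mp hq).2) hcard
  have hsqrt : ∀ q, (Real.sqrt (ε * w q) / 4) ^ 2 = ε / 16 * w q := fun q => by
    rw [div_pow, Real.sq_sqrt (mul_nonneg hε.le
      (mul_nonneg (sum_nonneg fun _ _ => hd _) (sum_nonneg fun _ _ => hd _)))]
    ring
  simp only [hsqrt, ← mul_sum] at hrecorded
  have hw := sum_rowSum_mul_colSum_le d hd
    (univ.filter fun q : σ × σ => ε * D ≤ d q ∨ d' q ≠ 0)
  have hrest : ∑ q ∈ univ.filter (fun q : σ × σ => ¬(ε * D ≤ d q ∨ d' q ≠ 0)),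
      (d q - d' q) ^ 2 ≤ ε * D ^ 2 / 2 := by
    simp only [not_or, not_le, not_not]
    refine le_of_eq_of_le (sum_congr rfl fun q hq => ?_) hsmall
    rw [(mem_filter.mp hq).2.2, sub_zero]
  have htotal : ∑ q, (d q - d' q) ^ 2 ≤ ε * D ^ 2 / 2 + ε * D ^ 2 / 8 + ε * D ^ 2 / 2 ^ 15 := by
    have hcardterm : 2 * (4 / ε) * (ε * D / 2 ^ 9) ^ 2 = ε * D ^ 2 / 2 ^ 15 := by
      field_simp; ring
    rw [← sum_filter_add_sum_filter_not univ fun q => ε * D ≤ d q ∨ d' q ≠ 0]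
    nlinarith
  have hεD : 0 ≤ ε * D ^ 2 := by positivity
  constructor <;> linarith

/-- Bounding the total squared error of the sparse recovery matrix `D'`: under the stated
per-pair error bounds, cardinality bound, and small-entry bound, we get
`Σ (d − d')² ≤ ((2¹³+2¹²+1)/2¹⁴)·ε·d² ≤ 0.752·ε·d²`. -/
theorem sparse_recovery_error_bound {σ : Type*} [Fintype σ] (d d' : σ × σ → ℝ)
    (hd : ∀ q, 0 ≤ d q) (hd' : ∀ q, 0 ≤ d' q) (ε : ℝ) (hε : 0 < ε)
    (hbound : ∀ q : σ × σ, (ε * (∑ r, d r) ≤ d q ∨ d' q ≠ 0) →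
      |d q - d' q| ≤ Real.sqrt (ε * (∑ v', d (q.1, v')) * (∑ u', d (u', q.2))) / 4
        + ε * (∑ r, d r) / 2 ^ 9)
    (hcard : ((Finset.univ.filter
        (fun q : σ × σ => ε * (∑ r, d r) ≤ d q ∨ d' q ≠ 0)).card : ℝ) ≤ 4 / ε)
    (hsmall : ∑ q ∈ Finset.univ.filter
        (fun q : σ × σ => d q < ε * (∑ r, d r) ∧ d' q = 0), (d q) ^ 2
      ≤ ε * (∑ r, d r) ^ 2 / 2) :
    ∑ q, (d q - d' q) ^ 2 ≤ ((2 ^ 13 + 2 ^ 12 + 1) / 2 ^ 14) * ε * (∑ r, d r) ^ 2 ∧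
    ∑ q, (d q - d' q) ^ 2 ≤ 0.752 * ε * (∑ r, d r) ^ 2 :=
  sparse_recovery_error_bound_general d d' hd ε hε hbound hcard hsmall
end
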